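/- Feferman–Vaught-style decomposition for symbolic tree automata: a tree d over domain D is in L(M) if and only if there exists a bit-string tree τ with the same domain (set of positions) as d that is accepted by the propositional abstraction of M (transitions relabeled by propositional formulas over variables X₁,…,X_k corresponding to the atomic predicates φ₁,…,φ_k), such that for every position n and every i ∈ {1,…,k}, the i-th bit of τ(n) is 1 if and only if φ_i(d(n)) holds. -/
import Mathlib


inductive BTree (α : Type*) where
  | leaf : BTree α
  | node : α → BTree α → BTree α → BTree α

structure STA (D Q Ψ : Type*) where
  denote : Ψ → Set D
  init : Q
  final : Set Q
  delta : Set (Q × Ψ × Q × Q)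

inductive STA.Accepts {D Q Ψ : Type*} (M : STA D Q Ψ) : Q → BTree D → Prop where
  | leaf {q : Q} : q ∈ M.final → M.Accepts q BTree.leaf
  | node {q₁ q₂ q₃ : Q} {ψ : Ψ} {d : D} {τ₁ τ₂ : BTree D} :
      (q₁, ψ, q₂, q₃) ∈ M.delta → d ∈ M.denote ψ →
      M.Accepts q₁ τ₁ → M.Accepts q₂ τ₂ → M.Accepts q₃ (BTree.node d τ₁ τ₂)

inductive PropForm (k : ℕ) where
  | var : Fin k → PropForm k
  | and : PropForm k → PropForm k → PropForm k
  | or : PropForm k → PropForm k → PropForm k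
  | not : PropForm k → PropForm k

def PropForm.eval {k : ℕ} (β : Fin k → Bool) : PropForm k → Bool
  | var i => β i
  | and φ ψ => φ.eval β && ψ.eval β
  | or φ ψ => φ.eval β || ψ.eval β
  | not φ => !(φ.eval β)

/-- `Corresponds φ d τ` : the bit-string tree `τ` has the same domain (set of positions)
as `d`, and at every position `n` the `i`-th bit of `τ(n)` is `1` iff `φ i (d(n))` holds. -/
inductive Corresponds {D : Type*} {k : ℕ} (φ : Fin k → Set D) :
    BTree D → BTree (Fin k → Bool) → Prop where
  | leaf : Corresponds φ BTree.leaf BTree.leaf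
  | node {d : D} {β : Fin k → Bool} {τ₁ τ₂ : BTree D} {t₁ t₂ : BTree (Fin k → Bool)} :
      (∀ i, β i = true ↔ d ∈ φ i) →
      Corresponds φ τ₁ t₁ → Corresponds φ τ₂ t₂ →
      Corresponds φ (BTree.node d τ₁ τ₂) (BTree.node β t₁ t₂)

/-- The propositional abstraction of `M`: same states, transitions relabeled by
propositional formulas (via `g`), running over the alphabet `{0,1}^k`, where a
bit-string satisfies a guard iff it makes the corresponding formula true. -/
def propAbstraction {D Q Ψ : Type*} {k : ℕ} (M : STA D Q Ψ) (g : Ψ → PropForm k) :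
    STA (Fin k → Bool) Q (PropForm k) where
  denote := fun L => {β | L.eval β = true}
  init := M.init
  final := M.final
  delta := {t | ∃ q₁ ψ q₂ q₃, (q₁, ψ, q₂, q₃) ∈ M.delta ∧ t = (q₁, g ψ, q₂, q₃)}

/-- Feferman–Vaught-style decomposition for symbolic tree automata: a tree `d` is
accepted by `M` iff there is a corresponding bit-string tree accepted by the
propositional abstraction of `M`. -/
theorem feferman_vaught_decomposition {D Q Ψ : Type*} {k : ℕ}
    (M : STA D Q Ψ) (φ : Fin k → Set D) (g : Ψ → PropForm k)
    (hg : ∀ ψ : Ψ, M.denote ψ = {d | ∀ β : Fin k → Bool,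
        (∀ i, β i = true ↔ d ∈ φ i) → (g ψ).eval β = true})
    (d : BTree D) :
    M.Accepts M.init d ↔
      ∃ τ : BTree (Fin k → Bool), Corresponds φ d τ ∧
        (propAbstraction M g).Accepts (propAbstraction M g).init τ := by
  classical
  constructor
  · intro h
    have main : ∀ q (d : BTree D), M.Accepts q d →
        ∃ τ, Corresponds φ d τ ∧ (propAbstraction M g).Accepts q τ := by
      intro q d h
      induction h with
      | leaf hf => exact ⟨BTree.leaf, Corresponds.leaf, STA.Accepts.leaf hf⟩
      | node ht hd h₁ h₂ ih₁ ih₂ =>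
        obtain ⟨t₁, hc₁, ha₁⟩ := ih₁
        obtain ⟨t₂, hc₂, ha₂⟩ := ih₂
        rename_i q₁ q₂ q₃ ψ d' τ₁ τ₂
        refine ⟨BTree.node (fun i => decide (d' ∈ φ i)) t₁ t₂,
          Corresponds.node (fun i => by simp) hc₁ hc₂,
          STA.Accepts.node (ψ := g ψ) ⟨q₁, ψ, q₂, q₃, ht, rfl⟩ ?_ ha₁ ha₂⟩
        rw [hg ψ] at hd
        exact hd _ (fun i => by simp)
    exact main _ _ h
  · rintro ⟨τ, hc, ha⟩
    have main : ∀ q τ, (propAbstraction M g).Accepts q τ →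
        ∀ d : BTree D, Corresponds φ d τ → M.Accepts q d := by
      intro q τ ha
      induction ha with
      | leaf hf =>
        intro d hc
        cases hc
        exact STA.Accepts.leaf hf
      | @node p₁ p₂ p₃ L β tL tR ht hβ h₁ h₂ ih₁ ih₂ =>
        intro d hc
        cases hc with
        | node hβd hc₁ hc₂ =>
          obtain ⟨q₁, ψ, q₂, q₃, hδ, heq⟩ := ht
          cases heq
          refine STA.Accepts.node hδ ?_ (ih₁ _ hc₁) (ih₂ _ hc₂)
          rw [hg ψ]
          intro β' hβ'
          have : β' = β := funext fun i => by
            have h1 := hβ' i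
            have h2 := hβd i
            cases hb : β i <;> cases hb' : β' i <;> simp_all
          rw [this]
          exact hβ
    exact main _ _ ha _ hc
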